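/- arXiv:2108.06308 — 2 statements merged into one kernel-verified Lean document; each statement's English description precedes it below -/
import Mathlib

section
/- Let (X,Z^k,T) be a continuum-wise expansive Z^k-action on a compact metric space (X,d) with expansivity constant 2c > 0. Then for every ε > 0 there exists a positive integer m = m(ε) such that every connected compact subset A of X satisfying max{diam T^n(A) : n ∈ [-m,m]^k} ≤ 2c has diam(A) < ε. -/
open Set Filter Metric MeasureTheory
open scoped ENNReal NNReal

noncomputable section

/-- `𝒰` is a finite open cover of `X`. -/
def IsFinOpenCover (X : Type) [TopologicalSpace X] (𝒰 : Set (Set X)) : Prop :=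
  𝒰.Finite ∧ (∀ U ∈ 𝒰, IsOpen U) ∧ ⋃₀ 𝒰 = Set.univ

/-- `𝒰` is a finite closed cover of `X`. -/
def IsFinClosedCover (X : Type) [TopologicalSpace X] (𝒰 : Set (Set X)) : Prop :=
  𝒰.Finite ∧ (∀ U ∈ 𝒰, IsClosed U) ∧ ⋃₀ 𝒰 = Set.univ

/-- The order of a cover: `max_x (#{U ∈ 𝒰 | x ∈ U} - 1)`. -/
def ordCover (X : Type) (𝒰 : Set (Set X)) : ℕ :=
  ⨆ x : X, ({U | U ∈ 𝒰 ∧ x ∈ U}.ncard - 1)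

/-- The degree `D(𝒰)`: minimal order of a finite open cover refining `𝒰`. -/
def degCover (X : Type) [TopologicalSpace X] (𝒰 : Set (Set X)) : ℕ :=
  sInf {m : ℕ | ∃ 𝒱 : Set (Set X),
    IsFinOpenCover X 𝒱 ∧ (∀ V ∈ 𝒱, ∃ U ∈ 𝒰, V ⊆ U) ∧ ordCover X 𝒱 = m}

/-- Lebesgue covering dimension. -/
def covDim (K : Type) [TopologicalSpace K] : ℕ∞ :=
  ⨆ (𝒰 : Set (Set K)) (_ : IsFinOpenCover K 𝒰), (degCover K 𝒰 : ℕ∞)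

/-- `Widim_ε(X, ρ)`: minimal covering dimension of a compact metric space `K`
admitting a continuous `ε`-embedding (w.r.t. the distance function `ρ`) from `X`. -/
def widim (X : Type) [TopologicalSpace X] (ρ : X → X → ℝ) (ε : ℝ) : ℕ∞ :=
  sInf {m : ℕ∞ | ∃ (K : Type) (_ : MetricSpace K) (_ : CompactSpace K) (f : X → K),
    Continuous f ∧ (∀ x y, f x = f y → ρ x y < ε) ∧ covDim K = m}

/-- The dynamical distance `ρ^T_Ω(x,y) = sup_{n ∈ Ω} ρ(T^n x, T^n y)`. -/
def dynDist {X : Type} {k : ℕ} (ρ : X → X → ℝ) (T : (Fin k → ℤ) → X → X)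
    (Ω : Set (Fin k → ℤ)) (x y : X) : ℝ :=
  ⨆ n ∈ Ω, ρ (T n x) (T n y)

/-- The cube `[-N,N]^k ⊆ ℤ^k`. -/
def cubeZ (k N : ℕ) : Set (Fin k → ℤ) := {n | ∀ i, |n i| ≤ (N : ℤ)}

/-- The boundary `∂[-N,N]^k ⊆ ℤ^k`. -/
def cubeBoundary (k N : ℕ) : Set (Fin k → ℤ) :=
  {n | (∀ i, |n i| ≤ (N : ℤ)) ∧ ∃ j, n j = (N : ℤ) ∨ n j = -(N : ℤ)}

/-- The natural embedding `ℤ^k → ℝ^k`. -/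
def embZR {k : ℕ} (u : Fin k → ℤ) : EuclideanSpace ℝ (Fin k) := WithLp.toLp 2 (fun i => (u i : ℝ))

/-- `B_r(V) = {u ∈ ℤ^k : |u - w| < r for some w ∈ V}`. -/
def ballZ (k : ℕ) (V : Set (EuclideanSpace ℝ (Fin k))) (r : ℝ) : Set (Fin k → ℤ) :=
  {u | ∃ w ∈ V, dist (embZR u) w < r}

/-- `vol_h(V ∩ [-N,N]^k)`, the `h`-dimensional Hausdorff measure of the
intersection of `V` with the real cube `[-N,N]^k`. -/
def volCap (k h : ℕ) (V : Submodule ℝ (EuclideanSpace ℝ (Fin k))) (N : ℕ) : ℝ≥0∞ :=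
  μH[(h : ℝ)] ((V : Set (EuclideanSpace ℝ (Fin k))) ∩ {x | ∀ i, |x i| ≤ (N : ℝ)})

/-- The `h`-dimensional directional mean dimension of the `ℤ^k`-action `T` with respect to
the subspace `V`, computed with the parameter `r` and the distance function `ρ`:
`mdim(X,T,V;r) = lim_{ε→0} liminf_{N→∞} Widim_ε(X, ρ^T_{B_r(V) ∩ [-N,N]^k}) / vol_h(V ∩ [-N,N]^k)`
(the limit as `ε → 0` of a quantity nonincreasing in `ε` is its supremum over `ε > 0`). -/
def dirMdim (k : ℕ) (X : Type) [TopologicalSpace X] (ρ : X → X → ℝ)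
    (T : (Fin k → ℤ) → X → X) (V : Submodule ℝ (EuclideanSpace ℝ (Fin k)))
    (r : ℝ) (h : ℕ) : ℝ≥0∞ :=
  ⨆ (ε : ℝ) (_ : 0 < ε),
    Filter.liminf (fun N : ℕ =>
      (widim X (dynDist ρ T (ballZ k (V : Set (EuclideanSpace ℝ (Fin k))) r ∩ cubeZ k N)) ε
        : ℝ≥0∞) / volCap k h V N) Filter.atTop

/-- `T` is a continuous action of `ℤ^k` on `X`. -/
structure IsZkAction (k : ℕ) (X : Type) [TopologicalSpace X]
    (T : (Fin k → ℤ) → X → X) : Prop where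
  cont : ∀ n, Continuous (T n)
  zero : T 0 = id
  add : ∀ m n, T (m + n) = T m ∘ T n

/-- The join `⋁_{n ∈ Ω} T^n 𝒰`; here `T^n(U) = (T^{-n})⁻¹(U)` since `T^n` is a
bijection with inverse `T^{-n}`. -/
def joinCover {X : Type} {k : ℕ} (T : (Fin k → ℤ) → X → X) (Ω : Set (Fin k → ℤ))
    (𝒰 : Set (Set X)) : Set (Set X) :=
  {W | ∃ g : (Fin k → ℤ) → Set X, (∀ n ∈ Ω, g n ∈ 𝒰) ∧ W = ⋂ n ∈ Ω, T (-n) ⁻¹' g n}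

/-- The mean dimension of a `ℤ^m`-action:
`mdim(X,ℤ^m,S) = sup_𝒰 lim_{N→∞} D(⋁_{n∈[-N,N]^m} S^n 𝒰)/(2N+1)^m`. -/
def mdimAct (m : ℕ) (X : Type) [TopologicalSpace X] (S : (Fin m → ℤ) → X → X) : ℝ≥0∞ :=
  ⨆ (𝒰 : Set (Set X)) (_ : IsFinOpenCover X 𝒰),
    Filter.liminf (fun N : ℕ =>
      (degCover X (joinCover S (cubeZ m N) 𝒰) : ℝ≥0∞) / (2 * N + 1 : ℝ≥0∞) ^ m)
      Filter.atTop

/-- Diameter of a set with respect to a distance function `ρ`. -/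
def diamBy {X : Type} (ρ : X → X → ℝ) (s : Set X) : ℝ := ⨆ x ∈ s, ⨆ y ∈ s, ρ x y

/-- Mesh of a cover with respect to a distance function `ρ`. -/
def meshBy {X : Type} (ρ : X → X → ℝ) (𝒲 : Set (Set X)) : ℝ := ⨆ W ∈ 𝒲, diamBy ρ W

end

/-! The proof is a compactness argument in the hyperspace of nonempty compact sets with the
Vietoris (= Hausdorff metric) topology: the continua of diameter at least `ε` all of whose
images under `Ω m` have diameter at most `r` form a decreasing sequence of closed sets there,
whose intersection is empty by continuum-wise expansivity, so one of them is already empty. -/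

namespace TopologicalSpace.NonemptyCompacts

theorem isClosed_setOf_isPreconnected {α : Type*} [TopologicalSpace α] [T2Space α] :
    IsClosed {K : NonemptyCompacts α | IsPreconnected (K : Set α)} := by
  refine isOpen_compl_iff.mp (isOpen_iff_forall_mem_open.mpr fun K hK => ?_)
  obtain ⟨u, v, hu, hv, hKuv, huv, hKu, hKv⟩ : ∃ u v : Set α, IsClosed u ∧ IsClosed v ∧
      (K : Set α) ⊆ u ∪ v ∧ Disjoint u v ∧ ¬(K : Set α) ⊆ u ∧ ¬(K : Set α) ⊆ v := by
    simpa [isPreconnected_iff_subset_of_fully_disjoint_closed K.isCompact.isClosed] using hK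
  -- Separate the two closed pieces of `K` by disjoint open sets, which then separate every
  -- compact set close to `K` as well.
  obtain ⟨U, V, hU, hV, hKU, hKV, hUV⟩ := SeparatedNhds.of_isCompact_isCompact
    (K.isCompact.inter_right hu) (K.isCompact.inter_right hv)
    (huv.mono inter_subset_right inter_subset_right)
  have hK_UV : (K : Set α) ⊆ U ∪ V := fun x hx =>
    (hKuv hx).imp (fun hxu => hKU ⟨hx, hxu⟩) fun hxv => hKV ⟨hx, hxv⟩
  have hK_U : ((K : Set α) ∩ U).Nonempty := by
    obtain ⟨x, hx, hxv⟩ := not_subset.mp hKv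
    exact ⟨x, hx, hKU ⟨hx, (hKuv hx).resolve_right hxv⟩⟩
  have hK_V : ((K : Set α) ∩ V).Nonempty := by
    obtain ⟨x, hx, hxu⟩ := not_subset.mp hKu
    exact ⟨x, hx, hKV ⟨hx, (hKuv hx).resolve_left hxu⟩⟩
  refine ⟨{L | (L : Set α) ⊆ U ∪ V} ∩ {L | ((L : Set α) ∩ U).Nonempty} ∩
    {L | ((L : Set α) ∩ V).Nonempty}, ?_, ?_, ⟨⟨hK_UV, hK_U⟩, hK_V⟩⟩
  · rintro L ⟨⟨hL_UV, x, hxL, hxU⟩, y, hyL, hyV⟩ hL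
    rcases hL.subset_or_subset hU hV hUV hL_UV with hLU | hLV
    · exact hUV.notMem_of_mem_right hyV (hLU hyL)
    · exact hUV.notMem_of_mem_left hxU (hLV hxL)
  · exact ((isOpen_subsets_of_isOpen (hU.union hV)).inter (isOpen_inter_nonempty_of_isOpen hU)).inter
      (isOpen_inter_nonempty_of_isOpen hV)

end TopologicalSpace.NonemptyCompacts

namespace Metric.NonemptyCompacts

open TopologicalSpace (NonemptyCompacts)

variable {α β : Type*} [MetricSpace α] [MetricSpace β]

theorem exists_dist_le_dist_of_mem {K L : NonemptyCompacts α} {x : α} (hx : x ∈ K) :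
    ∃ y ∈ L, dist x y ≤ dist K L := by
  obtain ⟨y, hy, hxy⟩ := L.isCompact.exists_infDist_eq_dist L.nonempty x
  refine ⟨y, hy, hxy ▸ infDist_le_hausdorffDist_of_mem hx ?_⟩
  exact hausdorffEDist_ne_top_of_nonempty_of_bounded K.nonempty L.nonempty
    K.isCompact.isBounded L.isCompact.isBounded

theorem lipschitzWith_diam : LipschitzWith 2 fun K : NonemptyCompacts α => diam (K : Set α) := by
  refine LipschitzWith.of_le_add_mul 2 fun K L =>
    diam_le_of_forall_dist_le (add_nonneg diam_nonneg (by positivity)) fun x hx y hy => ?_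
  obtain ⟨x', hx', hxx'⟩ := exists_dist_le_dist_of_mem (L := L) hx
  obtain ⟨y', hy', hyy'⟩ := exists_dist_le_dist_of_mem (L := L) hy
  calc dist x y ≤ dist x x' + dist x' y' + dist y y' := by
        simpa only [dist_comm y] using dist_triangle4 x x' y' y
    _ ≤ dist K L + diam (L : Set α) + dist K L := by
        gcongr
        exact dist_le_diam_of_mem L.isCompact.isBounded hx' hy'
    _ = diam (L : Set α) + (2 : ℝ≥0) * dist K L := by push_cast; ring

theorem continuous_diam_image {f : α → β} (hf : Continuous f) :
    Continuous fun K : NonemptyCompacts α => diam (f '' K) :=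
  lipschitzWith_diam.continuous.comp hf.nonemptyCompacts_map

end Metric.NonemptyCompacts

section CWExpansive

open TopologicalSpace (NonemptyCompacts)

variable {ι X Y : Type*} [MetricSpace X] [MetricSpace Y]

def IsCWExpansive (f : ι → X → Y) (e : ℝ) : Prop :=
  ∀ A : Set X, IsCompact A → IsConnected A → A.Nontrivial → ∃ i, e < diam (f i '' A)

theorem IsCWExpansive.eventually_diam_lt [CompactSpace X] {f : ι → X → Y} {r : ℝ}
    (hexp : IsCWExpansive f r) (hf : ∀ i, Continuous (f i)) {Ω : ℕ → Set ι}
    (hΩ : Monotone Ω) (hΩ_exhaust : ∀ i, ∃ m, i ∈ Ω m) {ε : ℝ} (hε : 0 < ε) :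
    ∀ᶠ m in atTop, ∀ A : Set X, IsCompact A → IsConnected A →
      (∀ i ∈ Ω m, diam (f i '' A) ≤ r) → diam A < ε := by
  let S : ℕ → Set (NonemptyCompacts X) := fun m =>
    {K | IsPreconnected (K : Set X) ∧ ε ≤ diam (K : Set X) ∧ ∀ i ∈ Ω m, diam (f i '' K) ≤ r}
  have hS_closed : ∀ m, IsClosed (S m) := fun m => by
    simp only [S, ofPred_and, ofPred_forall]
    exact NonemptyCompacts.isClosed_setOf_isPreconnected.inter <|
      (isClosed_le continuous_const NonemptyCompacts.lipschitzWith_diam.continuous).inter <|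
        isClosed_biInter fun i _ =>
          isClosed_le (NonemptyCompacts.continuous_diam_image (hf i)) continuous_const
  have hS_anti : Antitone S := fun m m' hmm' K ⟨hK, hKε, hKr⟩ =>
    ⟨hK, hKε, fun i hi => hKr i (hΩ hmm' hi)⟩
  have hS_inter : ⋂ m, S m = ∅ := by
    refine eq_empty_of_forall_notMem fun K hK => ?_
    have hKS : ∀ m, K ∈ S m := mem_iInter.mp hK
    have hK_nontrivial : (K : Set X).Nontrivial := by
      by_contra hsub
      have := diam_subsingleton (not_nontrivial_iff.mp hsub)
      linarith [(hKS 0).2.1]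
    obtain ⟨i, hi⟩ := hexp K K.isCompact ⟨K.nonempty, (hKS 0).1⟩ hK_nontrivial
    obtain ⟨m, hm⟩ := hΩ_exhaust i
    exact (hi.trans_le ((hKS m).2.2 i hm)).false
  obtain ⟨m, hm⟩ := isCompact_univ.elim_directed_family_closed S hS_closed
    (by rw [hS_inter, inter_empty]) hS_anti.directed_ge
  filter_upwards [eventually_ge_atTop m] with m' hm' A hA hA_conn hA_diam
  by_contra! hA_ε
  let K : NonemptyCompacts X := ⟨⟨A, hA⟩, hA_conn.nonempty⟩
  have hK : K ∈ univ ∩ S m := ⟨mem_univ K, hS_anti hm' ⟨hA_conn.isPreconnected, hA_ε, hA_diam⟩⟩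
  simp [hm] at hK

end CWExpansive

theorem cubeZ_mono (k : ℕ) : Monotone (cubeZ k) := fun _ _ hmm' _ hn i =>
  (hn i).trans (by exact_mod_cast hmm')

theorem exists_mem_cubeZ {k : ℕ} (n : Fin k → ℤ) : ∃ m, n ∈ cubeZ k m :=
  ⟨Finset.univ.sup fun i => (n i).natAbs, fun i => by
    rw [Int.abs_eq_natAbs]
    exact_mod_cast Finset.le_sup (f := fun i => (n i).natAbs) (Finset.mem_univ i)⟩

theorem cw_expansive_small_diam_general
    (k : ℕ) (X : Type) [MetricSpace X] [CompactSpace X]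
    (T : (Fin k → ℤ) → X → X) (hT : IsZkAction k X T) (c : ℝ)
    (hexp : ∀ A : Set X, IsCompact A → IsConnected A → A.Nontrivial →
      ∃ n : Fin k → ℤ, 2 * c < Metric.diam (T n '' A)) :
    ∀ ε > (0 : ℝ), ∃ m : ℕ, 0 < m ∧
      ∀ A : Set X, IsCompact A → IsConnected A →
        (∀ n ∈ cubeZ k m, Metric.diam (T n '' A) ≤ 2 * c) →
        Metric.diam A < ε := by
  intro ε hε
  have hcw : IsCWExpansive T (2 * c) := hexp
  obtain ⟨m, hm_small, hm_pos⟩ := ((hcw.eventually_diam_lt hT.cont (cubeZ_mono k) exists_mem_cubeZ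
    hε).and (eventually_gt_atTop 0)).exists
  exact ⟨m, hm_pos, hm_small⟩

/-- For a continuum-wise expansive `ℤ^k`-action with expansivity constant
`2c`: for every `ε > 0` there is `m > 0` such that every continuum all of whose iterates
over `[-m,m]^k` have diameter at most `2c` has diameter less than `ε`. -/
theorem cw_expansive_small_diam
    (k : ℕ) (X : Type) [MetricSpace X] [CompactSpace X]
    (T : (Fin k → ℤ) → X → X) (hT : IsZkAction k X T) (c : ℝ) (hc : 0 < c)
    (hexp : ∀ A : Set X, IsCompact A → IsConnected A → A.Nontrivial →
      ∃ n : Fin k → ℤ, 2 * c < Metric.diam (T n '' A)) :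
    ∀ ε > (0 : ℝ), ∃ m : ℕ, 0 < m ∧
      ∀ A : Set X, IsCompact A → IsConnected A →
        (∀ n ∈ cubeZ k m, Metric.diam (T n '' A) ≤ 2 * c) →
        Metric.diam A < ε :=
  cw_expansive_small_diam_general k X T hT c hexp
end

section
/- Let (X,Z^k,T) be a continuum-wise expansive Z^k-action on a compact metric space (X,d) with expansivity constant 2c > 0, and let δ > 0 be such that for every connected compact A ⊆ X and N ≥ 1, c ≤ max{diam T^n(A) : n ∈ [-N,N]^k} ≤ 2c implies max{diam T^n(A) : n ∈ ∂[-N,N]^k} > δ. Then for every N ≥ 1 and every connected compact subset A of X: if max{diam T^n(A) : n ∈ ∂[-N,N]^k} < δ/2, then max{diam T^n(A) : n ∈ [-N,N]^k} < 2c. -/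
open Set Filter Metric MeasureTheory
open scoped ENNReal NNReal

/-
A continuum `A` some iterate of which over the cube has diameter `≥ 2c` contains a subcontinuum
`B` whose iterates over the cube all have diameter `≤ 2c`, at least one of them `≥ c`: by
boundary bumping, take the continuum through a point `p` of `A` inside the closed `c`-ball
around `p` for the dynamical distance `max_{n ∈ [-N,N]^k} d(T^n ·, T^n ·)` that reaches the
sphere of radius `c`. The choice of `δ` then gives a boundary iterate of `B`, hence of `A`,
of diameter `> δ > δ/2`.
-/

theorem exists_isClopen_mem_subset_of_connectedComponent_subset {α : Type*}
    [TopologicalSpace α] [T2Space α] [CompactSpace α] {x : α} {U : Set α} (hU : IsOpen U)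
    (hxU : connectedComponent x ⊆ U) : ∃ D, IsClopen D ∧ x ∈ D ∧ D ⊆ U := by
  let ι := {s : Set α // IsClopen s ∧ x ∈ s}
  have : Nonempty ι := ⟨⟨univ, isClopen_univ, mem_univ x⟩⟩
  have hdir : Directed (· ⊇ ·) fun s : ι => s.1 := by
    rintro ⟨s, hs, hxs⟩ ⟨t, ht, hxt⟩
    exact ⟨⟨s ∩ t, hs.inter ht, hxs, hxt⟩, inter_subset_left, inter_subset_right⟩
  obtain ⟨⟨D, hD, hxD⟩, hDU⟩ := exists_subset_nhds_of_compactSpace hdir (fun s => s.2.1.1)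
    fun y hy => hU.mem_nhds <| hxU <| by rwa [connectedComponent_eq_iInter_isClopen]
  exact ⟨D, hD, hxD, hDU⟩

/-- Boundary bumping. The component of `p` in `K ∩ F` leaves `U`: otherwise a clopen piece of
`K ∩ F` around it inside `U` would also be open in `K`, as `U ⊆ F`, hence all of `K`. -/
theorem IsConnected.exists_isConnected_subset_inter_not_subset {X : Type*} [TopologicalSpace X]
    [T2Space X] {K F U : Set X} {p : X} (hK : IsConnected K) (hKc : IsCompact K)
    (hF : IsClosed F) (hU : IsOpen U) (hUF : U ⊆ F) (hp : p ∈ K ∩ F) (hKU : ¬K ⊆ U) :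
    ∃ C ⊆ K ∩ F, IsCompact C ∧ IsConnected C ∧ p ∈ C ∧ ¬C ⊆ U := by
  set E := K ∩ F
  have : CompactSpace E := isCompact_iff_compactSpace.mp (hKc.inter_right hF)
  let C : Set E := connectedComponent ⟨p, hp⟩
  refine ⟨(↑) '' C, Subtype.coe_image_subset E C,
    isClosed_connectedComponent.isCompact.image continuous_subtype_val,
    isConnected_connectedComponent.image _ continuous_subtype_val.continuousOn,
    ⟨_, mem_connectedComponent, rfl⟩, fun hCU => ?_⟩
  obtain ⟨D, hD, hpD, hDU⟩ := exists_isClopen_mem_subset_of_connectedComponent_subset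
    (hU.preimage continuous_subtype_val) (image_subset_iff.mp hCU)
  obtain ⟨V, hV, rfl⟩ := isOpen_induced_iff.mp hD.isOpen
  have hDK : K ∩ (V ∩ U) ⊆ (↑) '' ((↑) ⁻¹' V : Set E) := fun x ⟨hxK, hxV, hxU⟩ =>
    ⟨⟨x, hxK, hUF hxU⟩, hxV, rfl⟩
  rcases isPreconnected_iff_subset_of_disjoint.mp hK.isPreconnected (V ∩ U)
      ((↑) '' ((↑) ⁻¹' V : Set E))ᶜ (hV.inter hU)
      (hD.isClosed.isCompact.image continuous_subtype_val).isClosed.isOpen_compl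
      (fun x hxK => (em _).imp (fun ⟨y, hyV, hyx⟩ => hyx ▸ ⟨hyV, hDU hyV⟩) id)
      (eq_empty_of_forall_notMem fun x ⟨hxK, hxVU, hxD⟩ => hxD (hDK ⟨hxK, hxVU⟩)) with
    hKVU | hKD
  · exact hKU (hKVU.trans inter_subset_right)
  · exact hKD hp.1 ⟨_, hpD, rfl⟩

theorem IsConnected.exists_subcontinuum_of_lt_diam_image {X Y ι : Type*} [TopologicalSpace X]
    [T2Space X] [PseudoMetricSpace Y] {f : ι → X → Y} {Ω : Set ι} (hΩ : Ω.Finite)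
    (hf : ∀ n ∈ Ω, Continuous (f n)) {A : Set X} (hA : IsConnected A) (hAc : IsCompact A)
    {c : ℝ} (hc : 0 ≤ c) {n₁ : ι} (hn₁ : n₁ ∈ Ω) (hlarge : c < diam (f n₁ '' A)) :
    ∃ B ⊆ A, IsCompact B ∧ IsConnected B ∧ (∃ n ∈ Ω, c ≤ diam (f n '' B)) ∧
      ∀ n ∈ Ω, diam (f n '' B) ≤ 2 * c := by
  obtain ⟨p, hp, q, hq, hpq⟩ : ∃ p ∈ A, ∃ q ∈ A, c < dist (f n₁ q) (f n₁ p) := by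
    by_contra! h
    refine hlarge.not_ge (diam_le_of_forall_dist_le hc ?_)
    simpa only [forall_mem_image] using fun x hx y hy => h y hy x hx
  set F := ⋂ n ∈ Ω, f n ⁻¹' closedBall (f n p) c
  set U := ⋂ n ∈ Ω, f n ⁻¹' ball (f n p) c
  have hF : IsClosed F := isClosed_biInter fun n hn => isClosed_closedBall.preimage (hf n hn)
  have hU : IsOpen U := hΩ.isOpen_biInter fun n hn => isOpen_ball.preimage (hf n hn)
  have hUF : U ⊆ F := biInter_mono subset_rfl fun n _ => preimage_mono ball_subset_closedBall
  have hpF : p ∈ F := mem_iInter₂.2 fun n _ => mem_closedBall_self hc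
  have hqU : q ∉ U := fun hqU => (mem_iInter₂.1 hqU n₁ hn₁ : f n₁ q ∈ ball _ _).not_ge hpq.le
  obtain ⟨B, hBAF, hBc, hB, hpB, hBU⟩ :=
    hA.exists_isConnected_subset_inter_not_subset hAc hF hU hUF ⟨hp, hpF⟩ fun h => hqU (h hq)
  refine ⟨B, fun x hx => (hBAF hx).1, hBc, hB, ?_, fun n hn => ?_⟩
  · obtain ⟨x, hxB, hxU⟩ := not_subset.1 hBU
    obtain ⟨n, hn, hxn⟩ : ∃ n ∈ Ω, c ≤ dist (f n x) (f n p) := by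
      simpa only [U, mem_iInter₂, mem_preimage, mem_ball, not_forall, not_lt, exists_prop] using hxU
    exact ⟨n, hn, hxn.trans <| dist_le_diam_of_mem (hBc.image (hf n hn)).isBounded
      (mem_image_of_mem _ hxB) (mem_image_of_mem _ hpB)⟩
  · exact diam_le_of_subset_closedBall hc <| image_subset_iff.2 fun x hx =>
      mem_iInter₂.1 (hBAF hx).2 n hn

theorem cubeZ_finite (k N : ℕ) : (cubeZ k N).Finite :=
  (finite_Icc (fun _ => -(N : ℤ)) fun _ => (N : ℤ)).subset fun _ hn =>
    ⟨fun i => (abs_le.1 (hn i)).1, fun i => (abs_le.1 (hn i)).2⟩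

theorem small_boundary_diam_implies_small_cube_diam_general
    (k : ℕ) (X : Type) [MetricSpace X]
    (T : (Fin k → ℤ) → X → X) (hT : IsZkAction k X T) (c : ℝ) (hc : 0 < c)
    (δ : ℝ) (hδ : 0 < δ)
    (hδprop : ∀ A : Set X, IsCompact A → IsConnected A → ∀ N : ℕ, 1 ≤ N →
      (∃ n ∈ cubeZ k N, c ≤ Metric.diam (T n '' A)) →
      (∀ n ∈ cubeZ k N, Metric.diam (T n '' A) ≤ 2 * c) →
      ∃ n ∈ cubeBoundary k N, δ < Metric.diam (T n '' A)) :
    ∀ N : ℕ, 1 ≤ N → ∀ A : Set X, IsCompact A → IsConnected A →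
      (∀ n ∈ cubeBoundary k N, Metric.diam (T n '' A) < δ / 2) →
      ∀ n ∈ cubeZ k N, Metric.diam (T n '' A) < 2 * c := by
  intro N hN A hAc hA hbound n₁ hn₁
  by_contra! hlarge
  obtain ⟨B, hBA, hBc, hB, hBlarge, hBsmall⟩ := hA.exists_subcontinuum_of_lt_diam_image
    (cubeZ_finite k N) (fun n _ => hT.cont n) hAc hc.le hn₁ (by linarith)
  obtain ⟨m, hm, hδm⟩ := hδprop B hBc hB N hN hBlarge hBsmall
  have hBA_diam := diam_mono (image_mono hBA) (hAc.image (hT.cont m)).isBounded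
  linarith [hbound m hm]

/-- For a continuum-wise expansive `ℤ^k`-action with expansivity constant
`2c` and `δ > 0` as in Statement 9: if all boundary iterates of a continuum `A` have
diameter less than `δ/2`, then all iterates of `A` over the cube have diameter
less than `2c`. -/
theorem small_boundary_diam_implies_small_cube_diam
    (k : ℕ) (X : Type) [MetricSpace X] [CompactSpace X]
    (T : (Fin k → ℤ) → X → X) (hT : IsZkAction k X T) (c : ℝ) (hc : 0 < c)
    (hexp : ∀ A : Set X, IsCompact A → IsConnected A → A.Nontrivial →
      ∃ n : Fin k → ℤ, 2 * c < Metric.diam (T n '' A))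
    (δ : ℝ) (hδ : 0 < δ)
    (hδprop : ∀ A : Set X, IsCompact A → IsConnected A → ∀ N : ℕ, 1 ≤ N →
      (∃ n ∈ cubeZ k N, c ≤ Metric.diam (T n '' A)) →
      (∀ n ∈ cubeZ k N, Metric.diam (T n '' A) ≤ 2 * c) →
      ∃ n ∈ cubeBoundary k N, δ < Metric.diam (T n '' A)) :
    ∀ N : ℕ, 1 ≤ N → ∀ A : Set X, IsCompact A → IsConnected A →
      (∀ n ∈ cubeBoundary k N, Metric.diam (T n '' A) < δ / 2) →
      ∀ n ∈ cubeZ k N, Metric.diam (T n '' A) < 2 * c :=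
  small_boundary_diam_implies_small_cube_diam_general k X T hT c hc δ hδ hδprop
end
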